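/- Let Σ be a finite alphabet and S₁, S₂ set-strings of equal length m over Σ. Let p₁ be a prime, r₁ ∈ ZMod p₁, p₂ a prime, r₂ ∈ ZMod p₂. Suppose (a) the Layer 1 hash O ↦ h^set_{p₁,r₁}(O) is injective on the family of all offset sets {OffSet_{S₁}(σ) : σ ∈ Σ} ∪ {OffSet_{S₂}(σ) : σ ∈ Σ}, and (b) the Layer 2 hash F ↦ h^set_{p₂,r₂}(F) is injective on the family of multisets {Φ₁(S₁[i]) : i} ∪ {Φ₁(S₂[i]) : i}, where Φ₁(S[i]) = {h^set_{p₁,r₁}(OffSet_S(σ)) : σ ∈ S i}. If S₁ and S₂ do not set-parameterized match, then there exists a position i with h^set_{p₂,r₂}(Φ₁(S₁[i])) ≠ h^set_{p₂,r₂}(Φ₁(S₂[i])). -/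

import Mathlib

/-- The occurrence set of character `σ` in the set-string `S`. -/
def Occ {Γ : Type*} [DecidableEq Γ] {m : ℕ} (S : Fin m → Finset Γ) (σ : Γ) :
    Finset (Fin m) :=
  Finset.univ.filter fun i => σ ∈ S i

/-- The offset set of character `σ` in the set-string `S`: the set of distances from
its first occurrence to each of its occurrences; `∅` if `σ` never occurs. -/
def OffSet {Γ : Type*} [DecidableEq Γ] {m : ℕ} (S : Fin m → Finset Γ) (σ : Γ) :
    Finset ℕ :=
  if h : (Occ S σ).Nonempty then
    (Occ S σ).image fun i : Fin m => (i : ℕ) - (((Occ S σ).min' h : Fin m) : ℕ)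
  else ∅

/-- The multiset offset representation of `S` at position `i`: the multiset of the
offset sets of the characters in `S i` (one element per character). -/
def offsetRep {Γ : Type*} [DecidableEq Γ] {m : ℕ} (S : Fin m → Finset Γ) (i : Fin m) :
    Multiset (Finset ℕ) :=
  (S i).val.map fun σ => OffSet S σ

/-- The Karp-Rabin multiset hash of a finite set of natural numbers:
`Σ_{x ∈ O} r^x` in `ZMod p`. -/
def setHash {p : ℕ} (r : ZMod p) (O : Finset ℕ) : ZMod p :=
  ∑ x ∈ O, r ^ x

/-- The multiset of Layer 1 fingerprints at position `i`: one Layer 1 hash of the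
offset set of `σ` for each character `σ ∈ S i`. -/
def Phi1 {Γ : Type*} [Fintype Γ] [DecidableEq Γ] {m p₁ : ℕ} (r₁ : ZMod p₁)
    (S : Fin m → Finset Γ) (i : Fin m) : Multiset (ZMod p₁) :=
  (S i).val.map fun σ => setHash r₁ (OffSet S σ)

/-- The Layer 2 hash of a multiset of Layer 1 fingerprints: `Σ_{f ∈ F} r₂^(f.val)`
with multiplicity, in `ZMod p₂`. -/
def mashHash {p₁ p₂ : ℕ} (r₂ : ZMod p₂) (F : Multiset (ZMod p₁)) : ZMod p₂ :=
  (F.map fun f => r₂ ^ f.val).sum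

def offAbs {m : ℕ} (A : Finset (Fin m)) : Finset ℕ :=
  if h : A.Nonempty then A.image fun i : Fin m => (i : ℕ) - ((A.min' h : Fin m) : ℕ) else ∅

lemma OffSet_eq_offAbs {Γ : Type*} [DecidableEq Γ] {m : ℕ} (S : Fin m → Finset Γ) (σ : Γ) :
    OffSet S σ = offAbs (Occ S σ) := rfl

lemma mem_Occ {Γ : Type*} [DecidableEq Γ] {m : ℕ} {S : Fin m → Finset Γ} {σ : Γ} {i : Fin m} :
    i ∈ Occ S σ ↔ σ ∈ S i := by simp [Occ]

lemma image_coe_eq {m : ℕ} (A : Finset (Fin m)) (h : A.Nonempty) :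
    A.image (fun i : Fin m => (i : ℕ)) =
      (offAbs A).image (· + ((A.min' h : Fin m) : ℕ)) := by
  rw [offAbs, dif_pos h, Finset.image_image]
  apply Finset.image_congr
  intro i hi
  have : ((A.min' h : Fin m) : ℕ) ≤ (i : ℕ) := Fin.le_def.1 (A.min'_le i hi)
  simp [Function.comp, Nat.sub_add_cancel this]

lemma offAbs_min_inj {m : ℕ} {A A' : Finset (Fin m)} (h : A.Nonempty) (h' : A'.Nonempty)
    (hoff : offAbs A = offAbs A') (hmin : ((A.min' h : Fin m) : ℕ) = ((A'.min' h' : Fin m) : ℕ)) :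
    A = A' := by
  apply Finset.image_injective (f := fun i : Fin m => (i : ℕ)) Fin.val_injective
  rw [image_coe_eq A h, image_coe_eq A' h', hoff, hmin]

open Finset in
lemma count_offsetRep {Γ : Type*} [Fintype Γ] [DecidableEq Γ] {m : ℕ}
    (S : Fin m → Finset Γ) (i : Fin m) (O : Finset ℕ) :
    (offsetRep S i).count O =
      (Finset.univ.filter fun σ : Γ => σ ∈ S i ∧ offAbs (Occ S σ) = O).card := by
  rw [offsetRep, Multiset.count_map]
  have h1 : (Finset.univ.filter fun σ : Γ => σ ∈ S i ∧ offAbs (Occ S σ) = O)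
      = (S i).filter fun σ => O = OffSet S σ := by
    ext σ
    simp only [Finset.mem_filter, Finset.mem_univ, true_and]
    simp [OffSet_eq_offAbs, eq_comm, and_comm]
  rw [h1]
  rfl

open Finset in
lemma card_eq_sum_occ {Γ : Type*} [Fintype Γ] [DecidableEq Γ] {m : ℕ}
    (S : Fin m → Finset Γ) (i : Fin m) (O : Finset ℕ) :
    (Finset.univ.filter fun σ : Γ => σ ∈ S i ∧ offAbs (Occ S σ) = O).card
      = ∑ A ∈ Finset.univ.filter (fun A : Finset (Fin m) => i ∈ A ∧ offAbs A = O),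
          (Finset.univ.filter fun σ : Γ => Occ S σ = A).card := by
  rw [Finset.card_eq_sum_card_fiberwise
    (f := Occ S) (t := Finset.univ.filter (fun A : Finset (Fin m) => i ∈ A ∧ offAbs A = O))
    (fun σ hσ => by
      simp only [Finset.mem_coe, mem_filter, mem_univ, true_and] at hσ ⊢
      exact ⟨mem_Occ.2 hσ.1, hσ.2⟩)]
  apply Finset.sum_congr rfl
  intro A hA
  simp only [mem_filter, mem_univ, true_and] at hA
  congr 1
  ext σ
  simp only [mem_filter, mem_univ, true_and]
  constructor
  · rintro ⟨_, hOcc⟩; exact hOcc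
  · rintro hOcc
    exact ⟨⟨mem_Occ.1 (hOcc ▸ hA.1), hOcc ▸ hA.2⟩, hOcc⟩

open Finset in
lemma count_fiber_eq {Γ : Type*} [Fintype Γ] [DecidableEq Γ] {m : ℕ}
    (S₁ S₂ : Fin m → Finset Γ) (H : ∀ i, offsetRep S₁ i = offsetRep S₂ i) :
    ∀ A : Finset (Fin m),
      (Finset.univ.filter fun σ : Γ => Occ S₁ σ = A).card
        = (Finset.univ.filter fun σ : Γ => Occ S₂ σ = A).card := by
  have main : ∀ n : ℕ, ∀ A : Finset (Fin m), ∀ h : A.Nonempty, ((A.min' h : Fin m) : ℕ) = n →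
      (Finset.univ.filter fun σ : Γ => Occ S₁ σ = A).card
        = (Finset.univ.filter fun σ : Γ => Occ S₂ σ = A).card := by
    intro n
    induction n using Nat.strong_induction_on with
    | _ n IH =>
      intro A h hmin
      set i := A.min' h with hi
      have hcnt := congrArg (Multiset.count (offAbs A)) (H i)
      rw [count_offsetRep, count_offsetRep, card_eq_sum_occ, card_eq_sum_occ] at hcnt
      set T := Finset.univ.filter (fun A' : Finset (Fin m) => i ∈ A' ∧ offAbs A' = offAbs A)
        with hT
      have hAT : A ∈ T := Finset.mem_filter.2 ⟨Finset.mem_univ _, A.min'_mem h, rfl⟩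
      rw [← Finset.add_sum_erase _ _ hAT, ← Finset.add_sum_erase _ _ hAT] at hcnt
      have hrest : ∀ A' ∈ T.erase A,
          (Finset.univ.filter fun σ : Γ => Occ S₁ σ = A').card
            = (Finset.univ.filter fun σ : Γ => Occ S₂ σ = A').card := by
        intro A' hA'
        obtain ⟨hne, hA'T⟩ := Finset.mem_erase.1 hA'
        simp only [hT, mem_filter, mem_univ, true_and] at hA'T
        have h' : A'.Nonempty := ⟨i, hA'T.1⟩
        have hle : ((A'.min' h' : Fin m) : ℕ) ≤ n := by
          rw [← hmin]
          exact Fin.le_def.1 (A'.min'_le i hA'T.1)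
        have hlt : ((A'.min' h' : Fin m) : ℕ) < n := by
          rcases lt_or_eq_of_le hle with h1 | h1
          · exact h1
          · exact absurd (offAbs_min_inj h' h hA'T.2 (by rw [h1, hmin])) hne
        exact IH _ hlt A' h' rfl
      rw [Finset.sum_congr rfl hrest] at hcnt
      exact Nat.add_right_cancel hcnt
  intro A
  rcases A.eq_empty_or_nonempty with rfl | h
  · have h1 : ∀ S : Fin m → Finset Γ,
        Fintype.card Γ = ∑ A ∈ (Finset.univ : Finset (Finset (Fin m))),
          (Finset.univ.filter fun σ : Γ => Occ S σ = A).card := by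
      intro S
      rw [← Finset.card_univ,
        Finset.card_eq_sum_card_fiberwise (f := Occ S) (fun σ _ => Finset.mem_univ _)]
    have h2 := (h1 S₁).symm.trans (h1 S₂)
    rw [← Finset.add_sum_erase _ _ (Finset.mem_univ (∅ : Finset (Fin m))),
        ← Finset.add_sum_erase _ _ (Finset.mem_univ (∅ : Finset (Fin m)))] at h2
    have h3 : ∀ A' ∈ (Finset.univ : Finset (Finset (Fin m))).erase ∅,
        (Finset.univ.filter fun σ : Γ => Occ S₁ σ = A').card
          = (Finset.univ.filter fun σ : Γ => Occ S₂ σ = A').card := by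
      intro A' hA'
      have h' : A'.Nonempty :=
        Finset.nonempty_iff_ne_empty.2 (Finset.ne_of_mem_erase hA')
      exact main _ A' h' rfl
    rw [Finset.sum_congr rfl h3] at h2
    exact Nat.add_right_cancel h2
  · exact main _ A h rfl

open Finset in
lemma exists_equiv {Γ : Type*} [Fintype Γ] [DecidableEq Γ] {m : ℕ} {f g : Γ → Finset (Fin m)}
    (h : ∀ A, (Finset.univ.filter fun σ => f σ = A).card
      = (Finset.univ.filter fun σ => g σ = A).card) :
    ∃ e : Γ ≃ Γ, ∀ σ, g (e σ) = f σ := by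
  have h' : ∀ A : Finset (Fin m),
      Fintype.card {σ // f σ = A} = Fintype.card {σ // g σ = A} := by
    intro A
    simpa [Fintype.card_subtype] using h A
  let e : Γ ≃ Γ := (Equiv.sigmaFiberEquiv f).symm.trans
    ((Equiv.sigmaCongrRight fun A => (Fintype.equivOfCardEq (h' A))).trans
      (Equiv.sigmaFiberEquiv g))
  refine ⟨e, fun σ => ?_⟩
  have : e σ = ((Fintype.equivOfCardEq (h' (f σ))) ⟨σ, rfl⟩).1 := rfl
  rw [this]
  exact ((Fintype.equivOfCardEq (h' (f σ))) ⟨σ, rfl⟩).2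

lemma multiset_map_injOn {α β : Type*} [DecidableEq α] {f : α → β} {P : Set α} (hf : Set.InjOn f P) :
    ∀ s t : Multiset α, (∀ x ∈ s, x ∈ P) → (∀ x ∈ t, x ∈ P) → s.map f = t.map f → s = t := by
  intro s
  induction s using Multiset.induction with
  | empty =>
    intro t _ _ hmap
    simp only [Multiset.map_zero] at hmap
    exact (Multiset.map_eq_zero.1 hmap.symm).symm
  | cons a s IH =>
    intro t hs ht hmap
    rw [Multiset.map_cons] at hmap
    have hfa : f a ∈ t.map f := hmap ▸ Multiset.mem_cons_self _ _
    obtain ⟨b, hb, hfb⟩ := Multiset.mem_map.1 hfa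
    have hab : b = a := hf (ht b hb) (hs a (Multiset.mem_cons_self _ _)) hfb
    subst hab
    have ht' : t = b ::ₘ t.erase b := (Multiset.cons_erase hb).symm
    rw [ht', Multiset.map_cons] at hmap
    rw [ht']
    congr 1
    apply IH (t.erase b)
    · intro x hx; exact hs x (Multiset.mem_cons_of_mem hx)
    · intro x hx; exact ht x (Multiset.mem_of_mem_erase hx)
    · exact (Multiset.cons_inj_right _).1 hmap


/-- Soundness of the two-layer hashing scheme: if the Layer 1 hash is injective on all
offset sets arising from `S₁` and `S₂`, and the Layer 2 hash is injective on all the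
fingerprint multisets arising at the positions of `S₁` and `S₂`, then whenever `S₁`
and `S₂` do not set-parameterized match there is a position where the Layer 2 mashed
values differ. -/
theorem exists_mash_ne_of_not_match {Γ : Type*} [Fintype Γ] [DecidableEq Γ] {m : ℕ}
    (S₁ S₂ : Fin m → Finset Γ)
    (p₁ : ℕ) (hp₁ : p₁.Prime) (r₁ : ZMod p₁)
    (p₂ : ℕ) (hp₂ : p₂.Prime) (r₂ : ZMod p₂)
    (hinj1 : Set.InjOn (fun O : Finset ℕ => setHash r₁ O)
      (Set.range (fun σ => OffSet S₁ σ) ∪ Set.range (fun σ => OffSet S₂ σ)))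
    (hinj2 : Set.InjOn (fun F : Multiset (ZMod p₁) => mashHash r₂ F)
      (Set.range (Phi1 r₁ S₁) ∪ Set.range (Phi1 r₁ S₂)))
    (hnm : ¬∃ π : Γ ≃ Γ, ∀ i, (S₁ i).image π = S₂ i) :
    ∃ i, mashHash r₂ (Phi1 r₁ S₁ i) ≠ mashHash r₂ (Phi1 r₁ S₂ i) := by
  by_contra hcon
  push_neg at hcon
  apply hnm
  have hPhi : ∀ i, Phi1 r₁ S₁ i = Phi1 r₁ S₂ i := fun i =>
    hinj2 ((Set.mem_union _ _ _).2 (Or.inl ⟨i, rfl⟩))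
      ((Set.mem_union _ _ _).2 (Or.inr ⟨i, rfl⟩)) (hcon i)
  have hOff : ∀ i, offsetRep S₁ i = offsetRep S₂ i := by
    intro i
    apply multiset_map_injOn hinj1
    · intro x hx
      rw [offsetRep] at hx
      obtain ⟨σ, _, rfl⟩ := Multiset.mem_map.1 hx
      exact (Set.mem_union _ _ _).2 (Or.inl ⟨σ, rfl⟩)
    · intro x hx
      rw [offsetRep] at hx
      obtain ⟨σ, _, rfl⟩ := Multiset.mem_map.1 hx
      exact (Set.mem_union _ _ _).2 (Or.inr ⟨σ, rfl⟩)
    · have := hPhi i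
      simpa [Phi1, offsetRep, Multiset.map_map, Function.comp] using this
  obtain ⟨e, he⟩ := exists_equiv (count_fiber_eq S₁ S₂ hOff)
  refine ⟨e, fun i => ?_⟩
  ext τ
  simp only [Finset.mem_image]
  constructor
  · rintro ⟨σ, hσ, rfl⟩
    exact mem_Occ.1 ((he σ) ▸ mem_Occ.2 hσ)
  · intro hτ
    refine ⟨e.symm τ, ?_, e.apply_symm_apply τ⟩
    have h1 : Occ S₂ (e (e.symm τ)) = Occ S₁ (e.symm τ) := he _
    rw [e.apply_symm_apply] at h1
    exact mem_Occ.1 (h1 ▸ mem_Occ.2 hτ)
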